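/- Let ω be a radial weight in D̂ (so ω̂(r) ≤ C ω̂((1+r)/2) for some C > 1). Then there exist constants C' > 0 and η > 0 such that the moments satisfy ω_x ≤ C' (y/x)^η ω_y for all 0 < x ≤ y < ∞. -/

import Mathlib

open MeasureTheory

/-- The tail integral of a radial weight. -/
noncomputable def hat (ω : ℝ → ℝ) (r : ℝ) : ℝ := ∫ s in r..1, ω s

/-- The x-th moment of a radial weight. -/
noncomputable def moment (ω : ℝ → ℝ) (x : ℝ) : ℝ := ∫ r in (0:ℝ)..1, r ^ x * ω r

/-! Put `rₙ = 1 - 2⁻ⁿ` and pick `η` with `C < 2 ^ η`; the doubling condition iterates to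
`ω̂(rₙ) ≤ 2 ^ (η k) ω̂(rₙ₊ₖ)`. The moment `ω_x` is comparable to `ω̂(rₙ)` when `2 ^ n ≈ x`.
From below, `r ^ x ≥ 1/2` on `[rₙ₊₁, 1]` by Bernoulli's inequality. From above, split `[0, rₙ]`
into the intervals `[rₖ, rₖ₊₁]`: there `r ^ x ≤ exp (-2 ^ (n - k - 1))`, which beats the growth
`2 ^ (η (n - k))` of `ω̂(rₖ) / ω̂(rₙ)` and leaves a geometric series. Comparing the scales of
`x` and `y` produces the factor `(y / x) ^ η`. -/

open Set Real Finset

noncomputable def dyadicRadius (n : ℕ) : ℝ := 1 - 2⁻¹ ^ n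

lemma dyadicRadius_zero : dyadicRadius 0 = 0 := by simp [dyadicRadius]

lemma dyadicRadius_succ (n : ℕ) : dyadicRadius (n + 1) = (1 + dyadicRadius n) / 2 := by
  simp only [dyadicRadius, pow_succ]; ring

lemma dyadicRadius_mem_Ico (n : ℕ) : dyadicRadius n ∈ Ico (0 : ℝ) 1 := by
  have h0 : (0 : ℝ) < 2⁻¹ ^ n := by positivity
  have h1 : (2 : ℝ)⁻¹ ^ n ≤ 1 := pow_le_one₀ (by norm_num) (by norm_num)
  constructor <;> simp only [dyadicRadius] <;> linarith

lemma dyadicRadius_mono : Monotone dyadicRadius := fun m n hmn => by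
  have := pow_le_pow_of_le_one (by norm_num : (0 : ℝ) ≤ 2⁻¹) (by norm_num) hmn
  simp only [dyadicRadius]; linarith

lemma dyadicRadius_rpow_le_exp {n j : ℕ} {x : ℝ} (hx : (2 : ℝ) ^ (n + j) ≤ x) :
    dyadicRadius n ^ x ≤ exp (-2 ^ j) := by
  have hx0 : 0 ≤ x := le_trans (by positivity) hx
  calc dyadicRadius n ^ x ≤ exp (-2⁻¹ ^ n) ^ x :=
        rpow_le_rpow (dyadicRadius_mem_Ico n).1 (one_sub_le_exp_neg _) hx0
    _ = exp (-(2⁻¹ ^ n * x)) := by rw [← exp_mul]; ring_nf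
    _ ≤ exp (-2 ^ j) := by
        gcongr
        calc (2 : ℝ) ^ j = 2⁻¹ ^ n * 2 ^ (n + j) := by rw [pow_add, inv_pow]; field_simp
          _ ≤ 2⁻¹ ^ n * x := by gcongr

lemma half_le_dyadicRadius_succ_pow (n : ℕ) : 1 / 2 ≤ dyadicRadius (n + 1) ^ 2 ^ n := by
  have hbern := one_add_mul_le_pow (a := -(2⁻¹ ^ (n + 1) : ℝ))
    (by linarith [pow_le_one₀ (n := n + 1) (by norm_num : (0 : ℝ) ≤ 2⁻¹) (by norm_num)]) (2 ^ n)
  have hhalf : ((2 ^ n : ℕ) : ℝ) * 2⁻¹ ^ (n + 1) = 1 / 2 := by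
    push_cast; rw [pow_succ, inv_pow]; field_simp
  rw [dyadicRadius, sub_eq_add_neg]
  linarith

lemma exp_neg_mul_pow_le {u : ℝ} (hu : 0 < u) (p : ℕ) :
    exp (-u) * u ^ p ≤ (p + 1).factorial / u := by
  have hexp := pow_div_factorial_le_exp u hu.le (p + 1)
  rw [div_le_iff₀ (by positivity)] at hexp
  rw [le_div_iff₀ hu]
  calc exp (-u) * u ^ p * u = exp (-u) * u ^ (p + 1) := by ring
    _ ≤ exp (-u) * (exp u * (p + 1).factorial) := by gcongr
    _ = (p + 1).factorial := by rw [← mul_assoc, ← exp_add]; simp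

lemma IntervalIntegrable.mono_of_le {f : ℝ → ℝ} {a b c d : ℝ}
    (hf : IntervalIntegrable f volume a d) (hab : a ≤ b) (hbc : b ≤ c) (hcd : c ≤ d) :
    IntervalIntegrable f volume b c :=
  hf.mono_set <| by
    rw [uIcc_of_le hbc, uIcc_of_le (hab.trans (hbc.trans hcd))]; exact Icc_subset_Icc hab hcd

lemma intervalIntegral.integral_nonneg_of_forall_Ioo {f : ℝ → ℝ} {a b : ℝ} (hab : a ≤ b)
    (hf : ∀ r ∈ Ioo a b, 0 ≤ f r) : 0 ≤ ∫ r in a..b, f r := by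
  rw [intervalIntegral.integral_of_le hab, integral_Ioc_eq_integral_Ioo]
  exact setIntegral_nonneg measurableSet_Ioo hf

section Weight

variable {ω : ℝ → ℝ}

lemma intervalIntegrable_rpow_mul {a b x : ℝ} (hx : 0 ≤ x) (hω : IntervalIntegrable ω volume a b) :
    IntervalIntegrable (fun r => r ^ x * ω r) volume a b :=
  hω.continuousOn_mul (continuous_rpow_const hx).continuousOn

lemma hat_nonneg (hω0 : ∀ r ∈ Ico (0 : ℝ) 1, 0 ≤ ω r) {a : ℝ} (ha : 0 ≤ a) (ha1 : a ≤ 1) :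
    0 ≤ hat ω a :=
  intervalIntegral.integral_nonneg_of_forall_Ioo ha1 fun r hr => hω0 r ⟨ha.trans hr.1.le, hr.2⟩

lemma moment_nonneg (hω0 : ∀ r ∈ Ico (0 : ℝ) 1, 0 ≤ ω r) (x : ℝ) : 0 ≤ moment ω x :=
  intervalIntegral.integral_nonneg_of_forall_Ioo zero_le_one fun r hr =>
    mul_nonneg (rpow_nonneg hr.1.le x) (hω0 r ⟨hr.1.le, hr.2⟩)

lemma hat_dyadicRadius_le_pow_mul {D : ℝ} (hD : 0 ≤ D)
    (hd : ∀ r ∈ Ico (0 : ℝ) 1, hat ω r ≤ D * hat ω ((1 + r) / 2)) (n k : ℕ) :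
    hat ω (dyadicRadius n) ≤ D ^ k * hat ω (dyadicRadius (n + k)) := by
  induction k with
  | zero => simp
  | succ k ih =>
    calc hat ω (dyadicRadius n) ≤ D ^ k * hat ω (dyadicRadius (n + k)) := ih
      _ ≤ D ^ k * (D * hat ω (dyadicRadius (n + k + 1))) := by
          gcongr
          rw [dyadicRadius_succ]
          exact hd _ (dyadicRadius_mem_Ico _)
      _ = D ^ (k + 1) * hat ω (dyadicRadius (n + (k + 1))) := by rw [pow_succ, mul_assoc]; rfl

lemma integral_rpow_mul_le_rpow_mul_hat (hω0 : ∀ r ∈ Ico (0 : ℝ) 1, 0 ≤ ω r)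
    (hωi : IntervalIntegrable ω volume 0 1) {a b x : ℝ} (hx : 0 ≤ x) (ha : 0 ≤ a) (hab : a ≤ b)
    (hb : b ≤ 1) : ∫ r in a..b, r ^ x * ω r ≤ b ^ x * hat ω a := by
  have hωab := hωi.mono_of_le ha hab hb
  have hhat : hat ω a = (∫ r in a..b, ω r) + hat ω b :=
    (intervalIntegral.integral_add_adjacent_intervals hωab
      (hωi.mono_of_le (ha.trans hab) hb le_rfl)).symm
  calc ∫ r in a..b, r ^ x * ω r ≤ ∫ r in a..b, b ^ x * ω r :=
        intervalIntegral.integral_mono_on_of_le_Ioo hab (intervalIntegrable_rpow_mul hx hωab)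
          (hωab.const_mul _) fun r hr => mul_le_mul_of_nonneg_right
            (rpow_le_rpow (ha.trans hr.1.le) hr.2.le hx)
            (hω0 r ⟨ha.trans hr.1.le, hr.2.trans_le hb⟩)
    _ = b ^ x * ∫ r in a..b, ω r := intervalIntegral.integral_const_mul _ _
    _ ≤ b ^ x * hat ω a :=
        mul_le_mul_of_nonneg_left (by linarith [hat_nonneg hω0 (ha.trans hab) hb])
          (rpow_nonneg (ha.trans hab) x)

lemma rpow_mul_hat_le_moment (hω0 : ∀ r ∈ Ico (0 : ℝ) 1, 0 ≤ ω r)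
    (hωi : IntervalIntegrable ω volume 0 1) {a x : ℝ} (hx : 0 ≤ x) (ha : 0 ≤ a) (ha1 : a ≤ 1) :
    a ^ x * hat ω a ≤ moment ω x := by
  have hωa1 := hωi.mono_of_le ha ha1 le_rfl
  have hhead : 0 ≤ ∫ r in (0 : ℝ)..a, r ^ x * ω r :=
    intervalIntegral.integral_nonneg_of_forall_Ioo ha fun r hr =>
      mul_nonneg (rpow_nonneg hr.1.le x) (hω0 r ⟨hr.1.le, hr.2.trans_le ha1⟩)
  calc a ^ x * hat ω a = ∫ r in a..1, a ^ x * ω r := (intervalIntegral.integral_const_mul _ _).symm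
    _ ≤ ∫ r in a..1, r ^ x * ω r :=
        intervalIntegral.integral_mono_on_of_le_Ioo ha1 (hωa1.const_mul _)
          (intervalIntegrable_rpow_mul hx hωa1) fun r hr => mul_le_mul_of_nonneg_right
            (rpow_le_rpow ha hr.1.le hx) (hω0 r ⟨ha.trans hr.1.le, hr.2⟩)
    _ ≤ moment ω x := by
        rw [moment, ← intervalIntegral.integral_add_adjacent_intervals
          (intervalIntegrable_rpow_mul hx (hωi.mono_of_le le_rfl ha ha1))
          (intervalIntegrable_rpow_mul hx hωa1)]
        linarith

lemma hat_dyadicRadius_succ_le_two_mul_moment (hω0 : ∀ r ∈ Ico (0 : ℝ) 1, 0 ≤ ω r)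
    (hωi : IntervalIntegrable ω volume 0 1) {y : ℝ} (hy : 0 ≤ y) {M : ℕ} (hyM : y ≤ 2 ^ M) :
    hat ω (dyadicRadius (M + 1)) ≤ 2 * moment ω y := by
  obtain ⟨h0, h1⟩ := dyadicRadius_mem_Ico (M + 1)
  have hhalf : 1 / 2 ≤ dyadicRadius (M + 1) ^ y :=
    calc 1 / 2 ≤ dyadicRadius (M + 1) ^ 2 ^ M := half_le_dyadicRadius_succ_pow M
      _ = dyadicRadius (M + 1) ^ ((2 : ℝ) ^ M) := by rw [← rpow_natCast]; push_cast; rfl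
      _ ≤ dyadicRadius (M + 1) ^ y := rpow_le_rpow_of_exponent_ge' h0 h1.le hy hyM
  have hmoment := rpow_mul_hat_le_moment hω0 hωi hy h0 h1.le
  nlinarith [hat_nonneg hω0 h0 h1.le]

lemma exists_two_pow_doubling (hω0 : ∀ r ∈ Ico (0 : ℝ) 1, 0 ≤ ω r)
    (h : ∃ C > 1, ∀ r ∈ Ico (0 : ℝ) 1, hat ω r ≤ C * hat ω ((1 + r) / 2)) :
    ∃ η > 0, ∀ r ∈ Ico (0 : ℝ) 1, hat ω r ≤ 2 ^ η * hat ω ((1 + r) / 2) := by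
  obtain ⟨C, hC, hd⟩ := h
  obtain ⟨η, hCη⟩ := pow_unbounded_of_one_lt C one_lt_two
  refine ⟨η, Nat.pos_of_ne_zero fun hη => by rw [hη, pow_zero] at hCη; linarith, fun r hr => ?_⟩
  exact (hd r hr).trans <| mul_le_mul_of_nonneg_right hCη.le <|
    hat_nonneg hω0 (by linarith [hr.1]) (by linarith [hr.2])

variable {η : ℕ}

lemma integral_dyadicRadius_le (hω0 : ∀ r ∈ Ico (0 : ℝ) 1, 0 ≤ ω r)
    (hωi : IntervalIntegrable ω volume 0 1)
    (hd : ∀ r ∈ Ico (0 : ℝ) 1, hat ω r ≤ 2 ^ η * hat ω ((1 + r) / 2))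
    {n j : ℕ} {x : ℝ} (hx : (2 : ℝ) ^ (n + 1 + j) ≤ x) :
    ∫ r in dyadicRadius n..dyadicRadius (n + 1), r ^ x * ω r
      ≤ (η + 1).factorial * 2 ^ η * (1 / 2) ^ j * hat ω (dyadicRadius (n + 1 + j)) := by
  obtain ⟨h0, h1⟩ := dyadicRadius_mem_Ico n
  have hhat := hat_nonneg hω0 (dyadicRadius_mem_Ico (n + 1 + j)).1 (dyadicRadius_mem_Ico _).2.le
  have hdoubling :
      hat ω (dyadicRadius n) ≤ (2 ^ η) ^ (j + 1) * hat ω (dyadicRadius (n + 1 + j)) := by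
    rw [show n + 1 + j = n + (j + 1) by ring]
    exact hat_dyadicRadius_le_pow_mul (by positivity) hd n (j + 1)
  have hexp : exp (-2 ^ j) * (2 ^ η) ^ (j + 1) ≤ (η + 1).factorial * 2 ^ η * (1 / 2) ^ j := by
    calc exp (-2 ^ j) * ((2 : ℝ) ^ η) ^ (j + 1) = 2 ^ η * (exp (-2 ^ j) * (2 ^ j) ^ η) := by ring
      _ ≤ 2 ^ η * ((η + 1).factorial / 2 ^ j) := by
          gcongr; exact exp_neg_mul_pow_le (by positivity) η
      _ = (η + 1).factorial * 2 ^ η * (1 / 2) ^ j := by rw [one_div_pow]; ring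
  calc ∫ r in dyadicRadius n..dyadicRadius (n + 1), r ^ x * ω r
      ≤ dyadicRadius (n + 1) ^ x * hat ω (dyadicRadius n) :=
        integral_rpow_mul_le_rpow_mul_hat hω0 hωi (le_trans (by positivity) hx) h0
          (dyadicRadius_mono n.le_succ) (dyadicRadius_mem_Ico _).2.le
    _ ≤ exp (-2 ^ j) * ((2 ^ η) ^ (j + 1) * hat ω (dyadicRadius (n + 1 + j))) :=
        mul_le_mul (dyadicRadius_rpow_le_exp hx) hdoubling (hat_nonneg hω0 h0 h1.le) (exp_pos _).le
    _ ≤ _ := by rw [← mul_assoc]; gcongr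

lemma moment_eq_sum_add (hωi : IntervalIntegrable ω volume 0 1) {x : ℝ} (hx : 0 ≤ x) (m : ℕ) :
    moment ω x = (∑ n ∈ range m, ∫ r in dyadicRadius n..dyadicRadius (n + 1), r ^ x * ω r)
      + ∫ r in dyadicRadius m..1, r ^ x * ω r := by
  obtain ⟨h0, h1⟩ := dyadicRadius_mem_Ico m
  rw [intervalIntegral.sum_integral_adjacent_intervals fun n _ =>
    intervalIntegrable_rpow_mul hx <| hωi.mono_of_le (dyadicRadius_mem_Ico n).1
      (dyadicRadius_mono n.le_succ) (dyadicRadius_mem_Ico _).2.le, dyadicRadius_zero]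
  exact (intervalIntegral.integral_add_adjacent_intervals
    (intervalIntegrable_rpow_mul hx (hωi.mono_of_le le_rfl h0 h1.le))
    (intervalIntegrable_rpow_mul hx (hωi.mono_of_le h0 h1.le le_rfl))).symm

lemma sum_integral_dyadicRadius_le (hω0 : ∀ r ∈ Ico (0 : ℝ) 1, 0 ≤ ω r)
    (hωi : IntervalIntegrable ω volume 0 1)
    (hd : ∀ r ∈ Ico (0 : ℝ) 1, hat ω r ≤ 2 ^ η * hat ω ((1 + r) / 2))
    {x : ℝ} {m : ℕ} (hm : (2 : ℝ) ^ m ≤ max 1 x) :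
    ∑ n ∈ range m, ∫ r in dyadicRadius n..dyadicRadius (n + 1), r ^ x * ω r
      ≤ 2 * ((η + 1).factorial * 2 ^ η) * hat ω (dyadicRadius m) := by
  set c : ℝ := (η + 1).factorial * 2 ^ η
  calc ∑ n ∈ range m, ∫ r in dyadicRadius n..dyadicRadius (n + 1), r ^ x * ω r
      ≤ ∑ n ∈ range m, c * (1 / 2) ^ (m - 1 - n) * hat ω (dyadicRadius m) := by
        refine sum_le_sum fun n hn => ?_
        have hnm : n + 1 + (m - 1 - n) = m := by have := mem_range.mp hn; omega
        have hmx : (2 : ℝ) ^ m ≤ x := (le_max_iff.mp hm).resolve_left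
          (not_le.mpr (one_lt_pow₀ one_lt_two (by omega)))
        have := integral_dyadicRadius_le hω0 hωi hd (x := x) (j := m - 1 - n) (by rwa [hnm])
        rwa [hnm] at this
    _ = c * hat ω (dyadicRadius m) * ∑ j ∈ range m, (1 / 2 : ℝ) ^ j := by
        rw [mul_sum, ← sum_range_reflect]
        refine sum_congr rfl fun n hn => ?_
        rw [show m - 1 - (m - 1 - n) = n by have := mem_range.mp hn; omega]
        ring
    _ ≤ c * hat ω (dyadicRadius m) * 2 := by
        have := hat_nonneg hω0 (dyadicRadius_mem_Ico m).1 (dyadicRadius_mem_Ico m).2.le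
        gcongr
        exact sum_geometric_two_le m
    _ = 2 * c * hat ω (dyadicRadius m) := by ring

lemma moment_le_mul_hat_dyadicRadius (hω0 : ∀ r ∈ Ico (0 : ℝ) 1, 0 ≤ ω r)
    (hωi : IntervalIntegrable ω volume 0 1)
    (hd : ∀ r ∈ Ico (0 : ℝ) 1, hat ω r ≤ 2 ^ η * hat ω ((1 + r) / 2))
    {x : ℝ} (hx : 0 ≤ x) {m : ℕ} (hm : (2 : ℝ) ^ m ≤ max 1 x) :
    moment ω x ≤ (2 * (η + 1).factorial * 2 ^ η + 1) * hat ω (dyadicRadius m) := by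
  have hhead := sum_integral_dyadicRadius_le hω0 hωi hd hm
  have htail := integral_rpow_mul_le_rpow_mul_hat hω0 hωi hx (dyadicRadius_mem_Ico m).1
    (dyadicRadius_mem_Ico m).2.le le_rfl
  rw [one_rpow, one_mul] at htail
  rw [moment_eq_sum_add hωi hx m]
  linarith

end Weight

theorem Dhat_implies_moment_bound_general (ω : ℝ → ℝ)
    (hω_nonneg : ∀ r ∈ Set.Ico (0:ℝ) 1, 0 ≤ ω r)
    (hω_int : IntervalIntegrable ω volume 0 1)
    (h : ∃ C > 1, ∀ r ∈ Set.Ico (0:ℝ) 1, hat ω r ≤ C * hat ω ((1 + r) / 2)) :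
    ∃ C' > 0, ∃ η > 0, ∀ x y : ℝ, 0 < x → x ≤ y →
      moment ω x ≤ C' * (y / x) ^ η * moment ω y := by
  obtain ⟨η, hη, hdη⟩ := exists_two_pow_doubling hω_nonneg h
  set S : ℝ := 2 * (η + 1).factorial * 2 ^ η + 1
  refine ⟨2 * S * 8 ^ η, by positivity, η, hη, fun x y hx hxy => ?_⟩
  obtain ⟨m, hmx, hxm⟩ := exists_nat_pow_near (le_max_left 1 x) one_lt_two
  obtain ⟨k, hkyx, hyxk⟩ := exists_nat_pow_near ((one_le_div hx).mpr hxy) one_lt_two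
  have hyk : y ≤ 2 ^ (m + k + 2) := by
    have := mul_lt_mul'' (hxm.trans_le' (le_max_right 1 x)) hyxk hx.le
      (div_nonneg (hx.le.trans hxy) hx.le)
    rw [mul_div_cancel₀ y hx.ne', ← pow_add] at this
    exact this.le.trans_eq (by ring_nf)
  calc moment ω x ≤ S * hat ω (dyadicRadius m) :=
        moment_le_mul_hat_dyadicRadius hω_nonneg hω_int hdη hx.le hmx
    _ ≤ S * ((2 ^ η) ^ (k + 3) * hat ω (dyadicRadius (m + k + 2 + 1))) := by
        gcongr
        exact hat_dyadicRadius_le_pow_mul (by positivity) hdη m (k + 3)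
    _ ≤ S * ((2 ^ η) ^ (k + 3) * (2 * moment ω y)) := by
        gcongr
        exact hat_dyadicRadius_succ_le_two_mul_moment hω_nonneg hω_int (hx.le.trans hxy) hyk
    _ = 2 * S * (2 ^ (k + 3)) ^ η * moment ω y := by rw [← pow_mul, ← pow_mul, mul_comm η]; ring
    _ ≤ 2 * S * (8 * (y / x)) ^ η * moment ω y := by
        refine mul_le_mul_of_nonneg_right ?_ (moment_nonneg hω_nonneg y)
        gcongr
        rw [pow_add]; linarith
    _ = 2 * S * 8 ^ η * (y / x) ^ η * moment ω y := by ring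

theorem Dhat_implies_moment_bound (ω : ℝ → ℝ)
    (hω_nonneg : ∀ r ∈ Set.Ico (0:ℝ) 1, 0 ≤ ω r)
    (hω_int : IntervalIntegrable ω volume 0 1)
    (hω_pos : ∀ r ∈ Set.Ico (0:ℝ) 1, 0 < hat ω r)
    (h : ∃ C > 1, ∀ r ∈ Set.Ico (0:ℝ) 1, hat ω r ≤ C * hat ω ((1 + r) / 2)) :
    ∃ C' > 0, ∃ η > 0, ∀ x y : ℝ, 0 < x → x ≤ y →
      moment ω x ≤ C' * (y / x) ^ η * moment ω y :=
  Dhat_implies_moment_bound_general ω hω_nonneg hω_int h
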